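/- arXiv:1103.4296 — 3 statements merged into one kernel-verified Lean document; each statement's English description precedes it below -/
import Mathlib

section
/- For any x, y ∈ ℝ^d and u > 0, the Lebesgue measure of the symmetric difference B_∞(x,u) △ B_∞(y,u) is at most 2 · ‖x − y‖₁ · (2u)^{d−1}. -/
/-! A point of `B(x,u) \ B(y,u)` has some coordinate `i` outside `[y i - u, y i + u]`, which
confines that coordinate to a set of length `|x i - y i|` while the other coordinates range over
intervals of length `2u`. A union bound over `i` gives `‖x - y‖₁ (2u)^(d-1)` for each half of the
symmetric difference. -/

open MeasureTheory Set

theorem Real.volume_Icc_diff_Icc_le (a b u : ℝ) :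
    volume (Icc (a - u) (a + u) \ Icc (b - u) (b + u)) ≤ ENNReal.ofReal |a - b| := by
  have hsub : Icc (a - u) (a + u) \ Icc (b - u) (b + u) ⊆
      Ico (a - u) (b - u) ∪ Ioc (b + u) (a + u) := by
    rintro t ⟨⟨hat, hta⟩, htb⟩
    rw [mem_Icc, not_and_or, not_le, not_le] at htb
    rcases htb with h | h
    · exact Or.inl ⟨hat, h⟩
    · exact Or.inr ⟨h, hta⟩
  calc volume (Icc (a - u) (a + u) \ Icc (b - u) (b + u))
      ≤ volume (Ico (a - u) (b - u)) + volume (Ioc (b + u) (a + u)) :=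
        (measure_mono hsub).trans (measure_union_le _ _)
    _ = ENNReal.ofReal (b - a) + ENNReal.ofReal (a - b) := by
        rw [Real.volume_Ico, Real.volume_Ioc]; ring_nf
    _ = ENNReal.ofReal |a - b| := by
        rcases le_total a b with h | h
        · rw [abs_of_nonpos (sub_nonpos.2 h), ENNReal.ofReal_of_nonpos (sub_nonpos.2 h), neg_sub,
            add_zero]
        · rw [abs_of_nonneg (sub_nonneg.2 h), ENNReal.ofReal_of_nonpos (sub_nonpos.2 h), zero_add]

theorem MeasureTheory.Measure.pi_univ_pi_diff_univ_pi_le {ι : Type*} [Fintype ι] [DecidableEq ι]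
    {α : ι → Type*} [∀ i, MeasurableSpace (α i)] (μ : ∀ i, Measure (α i))
    [∀ i, SigmaFinite (μ i)] (s t : ∀ i, Set (α i)) :
    Measure.pi μ (univ.pi s \ univ.pi t) ≤
      ∑ i, μ i (s i \ t i) * ∏ j ∈ Finset.univ \ {i}, μ j (s j) := by
  have hsub : univ.pi s \ univ.pi t ⊆ ⋃ i, univ.pi (Function.update s i (s i \ t i)) := by
    rintro w ⟨hs, ht⟩
    obtain ⟨i, -, hi⟩ := not_forall₂.1 ht
    refine mem_iUnion.2 ⟨i, fun j _ => ?_⟩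
    rcases eq_or_ne j i with rfl | hj
    · simpa using ⟨hs j trivial, hi⟩
    · simpa [hj] using hs j trivial
  calc Measure.pi μ (univ.pi s \ univ.pi t)
      ≤ ∑ i, Measure.pi μ (univ.pi (Function.update s i (s i \ t i))) :=
        (measure_mono hsub).trans (measure_iUnion_fintype_le _ _)
    _ = ∑ i, μ i (s i \ t i) * ∏ j ∈ Finset.univ \ {i}, μ j (s j) := by
        refine Finset.sum_congr rfl fun i _ => ?_
        rw [Measure.pi_pi, ← Finset.prod_update_of_mem (Finset.mem_univ i)]
        refine Finset.prod_congr rfl fun j _ => ?_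
        rcases eq_or_ne j i with rfl | hj <;> simp [*]

theorem setOf_forall_abs_sub_le_eq_pi {ι : Type*} (x : ι → ℝ) (u : ℝ) :
    {w : ι → ℝ | ∀ i, |w i - x i| ≤ u} = univ.pi fun i => Icc (x i - u) (x i + u) := by
  ext w
  simp only [mem_ofPred_eq, mem_univ_pi, mem_Icc, abs_sub_le_iff, sub_le_iff_le_add]
  exact forall_congr' fun i => by constructor <;> rintro ⟨h₁, h₂⟩ <;> constructor <;> linarith

theorem volume_univ_pi_Icc_diff_univ_pi_Icc_le {ι : Type*} [Fintype ι] (x y : ι → ℝ) {u : ℝ}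
    (hu : 0 ≤ u) :
    volume ((univ.pi fun i => Icc (x i - u) (x i + u)) \ univ.pi fun i => Icc (y i - u) (y i + u))
      ≤ ENNReal.ofReal ((∑ i, |x i - y i|) * (2 * u) ^ (Fintype.card ι - 1)) := by
  classical
  have hside : ∀ i, volume (Icc (x i - u) (x i + u)) = ENNReal.ofReal (2 * u) := fun i => by
    rw [Real.volume_Icc]; ring_nf
  calc _ ≤ ∑ i, ENNReal.ofReal |x i - y i| * ENNReal.ofReal (2 * u) ^ (Fintype.card ι - 1) := by
        rw [volume_pi]
        refine (Measure.pi_univ_pi_diff_univ_pi_le _ _ _).trans (Finset.sum_le_sum fun i _ => ?_)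
        rw [Finset.prod_congr rfl fun j _ => hside j, Finset.prod_const,
          Finset.card_sdiff_of_subset (by simp), Finset.card_singleton, Finset.card_univ]
        gcongr
        exact Real.volume_Icc_diff_Icc_le _ _ _
    _ = ENNReal.ofReal ((∑ i, |x i - y i|) * (2 * u) ^ (Fintype.card ι - 1)) := by
        rw [Finset.sum_mul, ENNReal.ofReal_sum_of_nonneg fun i _ => by positivity]
        refine Finset.sum_congr rfl fun i _ => ?_
        rw [ENNReal.ofReal_mul (abs_nonneg _), ENNReal.ofReal_pow (by positivity)]

open MeasureTheory in
theorem stmt5 (d : ℕ) (x y : Fin d → ℝ) (u : ℝ) (hu : 0 < u) :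
    volume (symmDiff {w : Fin d → ℝ | ∀ i, |w i - x i| ≤ u} {w | ∀ i, |w i - y i| ≤ u})
      ≤ ENNReal.ofReal (2 * (∑ i, |x i - y i|) * (2 * u) ^ (d - 1)) := by
  have hxy := volume_univ_pi_Icc_diff_univ_pi_Icc_le x y hu.le
  have hyx := volume_univ_pi_Icc_diff_univ_pi_Icc_le y x hu.le
  simp only [Fintype.card_fin, abs_sub_comm (y _)] at hxy hyx
  rw [setOf_forall_abs_sub_le_eq_pi, setOf_forall_abs_sub_le_eq_pi, Set.symmDiff_def]
  calc _ ≤ _ + _ := measure_union_le _ _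
    _ ≤ _ := add_le_add hxy hyx
    _ = _ := by rw [← ENNReal.ofReal_add (by positivity) (by positivity), ← add_mul, ← two_mul]
end

section
/- Let f : ℝ^d → ℝ be convex and L-Lipschitz with respect to a norm ‖·‖, let μ be a probability density on ℝ^d, and define f_μ(x) = ∫ f(x + z) μ(z) dz. Then for all x, y, the dual norm of ∇f_μ(x) − ∇f_μ(y) is at most L · ∫ |μ(z − x) − μ(z − y)| dz. -/
/-!
Shifting the variable of integration, `f_μ (a + u) - f_μ a = ∫ (f (w + u) - f w) μ (w - a) dw`,
so the second difference `f_μ (x + u) - f_μ (y + u) - (f_μ x - f_μ y)` is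
`∫ (f (w + u) - f w) (μ (w - x) - μ (w - y)) dw`, of size at most `L ‖u‖ ∫ |μ (w - x) - μ (w - y)|`.
Thus `u ↦ f_μ (x + u) - f_μ (y + u)` is Lipschitz at `0` with that constant, which bounds the norm
of its derivative `∇f_μ x - ∇f_μ y` there.
-/

open MeasureTheory
open scoped NNReal

theorem norm_fderiv_sub_fderiv_le {𝕜 E F : Type*} [NontriviallyNormedField 𝕜]
    [NormedAddCommGroup E] [NormedSpace 𝕜 E] [NormedAddCommGroup F] [NormedSpace 𝕜 F]
    {g : E → F} {x y : E} (hx : DifferentiableAt 𝕜 g x) (hy : DifferentiableAt 𝕜 g y)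
    {C : ℝ} (hC : 0 ≤ C) (hg : ∀ u, ‖g (x + u) - g (y + u) - (g x - g y)‖ ≤ C * ‖u‖) :
    ‖fderiv 𝕜 g x - fderiv 𝕜 g y‖ ≤ C := by
  have hshift {a : E} (ha : DifferentiableAt 𝕜 g a) :
      HasFDerivAt (fun u => g (a + u)) (fderiv 𝕜 g a) 0 :=
    (hasFDerivAt_comp_add_left a).2 (by simpa using ha.hasFDerivAt)
  refine ((hshift hx).sub (hshift hy)).le_of_lip' hC (.of_forall fun u => ?_)
  simpa using hg u

section Smoothing

variable {E : Type*} [NormedAddCommGroup E] [MeasurableSpace E] [BorelSpace E]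
  {ν : Measure E} {f μ : E → ℝ} {K : ℝ≥0}

theorem LipschitzWith.integrable_sub_comp_add_mul {g : E → ℝ} (hf : LipschitzWith K f)
    (hg : Integrable g ν) (a b : E) :
    Integrable (fun z => (f (b + z) - f (a + z)) * g z) ν := by
  refine hg.bdd_mul (c := K * ‖b - a‖) ?_ (.of_forall fun z => ?_)
  · exact (hf.continuous.comp (continuous_const_add b) |>.sub
      (hf.continuous.comp (continuous_const_add a))).aestronglyMeasurable
  · simpa [← dist_eq_norm, ← Real.dist_eq] using hf.dist_le_mul (b + z) (a + z)

theorem LipschitzWith.integrable_comp_add_mul (hf : LipschitzWith K f) (hμ : Integrable μ ν)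
    {a : E} (ha : Integrable (fun z => f (a + z) * μ z) ν) (b : E) :
    Integrable (fun z => f (b + z) * μ z) ν :=
  (ha.add (hf.integrable_sub_comp_add_mul hμ a b)).congr (.of_forall fun z => by simp only [Pi.add_apply]; ring)

variable [ν.IsAddLeftInvariant]

theorem integral_comp_add_mul_eq (F : E → ℝ) (a : E) :
    ∫ z, F (a + z) * μ z ∂ν = ∫ w, F w * μ (w - a) ∂ν := by
  simpa using integral_add_left_eq_self (μ := ν) (fun w => F w * μ (w - a)) a

theorem integral_comp_add_add_mul_sub_integral
    (hint : ∀ a, Integrable (fun z => f (a + z) * μ z) ν) (a u : E) :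
    ∫ z, f (a + u + z) * μ z ∂ν - ∫ z, f (a + z) * μ z ∂ν
      = ∫ w, (f (u + w) - f w) * μ (w - a) ∂ν := by
  rw [← integral_sub (hint _) (hint a), ← integral_comp_add_mul_eq]
  simp only [sub_mul, add_left_comm u a, add_assoc]

theorem LipschitzWith.abs_integral_second_difference_le (hf : LipschitzWith K f)
    (hμ : Integrable μ ν) (x y u : E) :
    |(∫ z, f (x + u + z) * μ z ∂ν - ∫ z, f (y + u + z) * μ z ∂ν)
        - (∫ z, f (x + z) * μ z ∂ν - ∫ z, f (y + z) * μ z ∂ν)|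
      ≤ K * ‖u‖ * ∫ w, |μ (w - x) - μ (w - y)| ∂ν := by
  by_cases hint : ∀ a, Integrable (fun z => f (a + z) * μ z) ν
  · have hΔ (a : E) : Integrable (fun w => (f (u + w) - f w) * μ (w - a)) ν := by
      simpa using hf.integrable_sub_comp_add_mul (hμ.comp_sub_right a) 0 u
    rw [sub_sub_sub_comm, integral_comp_add_add_mul_sub_integral hint,
      integral_comp_add_add_mul_sub_integral hint, ← integral_sub (hΔ x) (hΔ y),
      ← integral_const_mul, ← Real.norm_eq_abs]
    refine norm_integral_le_of_norm_le
      (((hμ.comp_sub_right x).sub (hμ.comp_sub_right y)).abs.const_mul _) (.of_forall fun w => ?_)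
    rw [← mul_sub, Real.norm_eq_abs, abs_mul]
    gcongr
    simpa [← dist_eq_norm, ← Real.dist_eq] using hf.dist_le_mul (u + w) w
  · -- One integrable translate makes all of them integrable, so here every integral is junk `0`.
    simp only [not_forall] at hint
    obtain ⟨a, ha⟩ := hint
    have hzero (b : E) : ∫ z, f (b + z) * μ z ∂ν = 0 :=
      integral_undef fun hb => ha (hf.integrable_comp_add_mul hμ hb a)
    simp only [hzero, sub_self, abs_zero]
    positivity

end Smoothing

open MeasureTheory in
theorem stmt9_general {E : Type*} [NormedAddCommGroup E] [NormedSpace ℝ E]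
    [MeasurableSpace E] [BorelSpace E]
    (ν : Measure E) [ν.IsAddHaarMeasure]
    (f : E → ℝ) (L : ℝ)
    (hlip : ∀ x y, |f x - f y| ≤ L * ‖x - y‖)
    (μ : E → ℝ) (hμ1 : ∫ z, μ z ∂ν = 1)
    (fμ : E → ℝ) (hfμ : ∀ x, fμ x = ∫ z, f (x + z) * μ z ∂ν)
    (hdiff : Differentiable ℝ fμ) (x y : E) :
    ‖fderiv ℝ fμ x - fderiv ℝ fμ y‖ ≤ L * ∫ z, |μ (z - x) - μ (z - y)| ∂ν := by
  rcases eq_or_ne x y with rfl | hxy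
  · simp
  have hL : 0 ≤ L := nonneg_of_mul_nonneg_left ((abs_nonneg _).trans (hlip x y))
    (norm_pos_iff.2 (sub_ne_zero.2 hxy))
  have hf : LipschitzWith L.toNNReal f :=
    .of_dist_le' fun a b => by simpa [Real.dist_eq, dist_eq_norm] using hlip a b
  have hμ : Integrable μ ν := .of_integral_ne_zero (by simp [hμ1])
  obtain rfl : fμ = fun a => ∫ z, f (a + z) * μ z ∂ν := funext hfμ
  refine norm_fderiv_sub_fderiv_le (hdiff x) (hdiff y) (by positivity) fun u => ?_
  simpa [Real.coe_toNNReal _ hL, mul_right_comm] using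
    hf.abs_integral_second_difference_le hμ x y u

open MeasureTheory in
theorem stmt9 {E : Type*} [NormedAddCommGroup E] [NormedSpace ℝ E]
    [FiniteDimensional ℝ E] [MeasurableSpace E] [BorelSpace E]
    (ν : Measure E) [ν.IsAddHaarMeasure]
    (f : E → ℝ) (L : ℝ) (hconv : ConvexOn ℝ Set.univ f)
    (hlip : ∀ x y, |f x - f y| ≤ L * ‖x - y‖)
    (μ : E → ℝ) (hμpos : ∀ z, 0 ≤ μ z) (hμ1 : ∫ z, μ z ∂ν = 1)
    (fμ : E → ℝ) (hfμ : ∀ x, fμ x = ∫ z, f (x + z) * μ z ∂ν)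
    (hdiff : Differentiable ℝ fμ) (x y : E) :
    ‖fderiv ℝ fμ x - fderiv ℝ fμ y‖ ≤ L * ∫ z, |μ (z - x) - μ (z - y)| ∂ν :=
  stmt9_general ν f L hlip μ hμ1 fμ hfμ hdiff x y
end

section
/- Let h_u be the shifted Huber function on ℝ: h_u(x) = x²/(2u) + u/2 for |x| ≤ u and h_u(x) = |x| for |x| > u. If Z is uniformly distributed on [−u, u], then E[|x + Z|] = h_u(x) for every x ∈ ℝ. -/
/-! The substitution `t = x + z` turns the integral into `∫ t in x - u..x + u, |t|`, which
`t * |t| / 2` evaluates; the two branches of the Huber function are the cases where the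
interval `[x - u, x + u]` does or does not contain `0`. -/

open MeasureTheory

theorem integral_abs_zero_left (b : ℝ) : ∫ t in (0 : ℝ)..b, |t| = b * |b| / 2 := by
  rcases le_total 0 b with hb | hb
  · have h : Set.EqOn (fun t : ℝ ↦ |t|) (fun t ↦ t) (Set.uIcc 0 b) := fun t ht ↦
      abs_of_nonneg (Set.uIcc_of_le hb ▸ ht).1
    rw [intervalIntegral.integral_congr h, integral_id, abs_of_nonneg hb]
    ring
  · have h : Set.EqOn (fun t : ℝ ↦ |t|) (fun t ↦ -t) (Set.uIcc 0 b) := fun t ht ↦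
      abs_of_nonpos (Set.uIcc_of_ge hb ▸ ht).2
    rw [intervalIntegral.integral_congr h, intervalIntegral.integral_neg, integral_id,
      abs_of_nonpos hb]
    ring

theorem integral_abs (a b : ℝ) : ∫ t in a..b, |t| = (b * |b| - a * |a|) / 2 := by
  have hint : ∀ c d : ℝ, IntervalIntegrable (fun t : ℝ ↦ |t|) volume c d :=
    fun _ _ ↦ continuous_abs.intervalIntegrable _ _
  rw [← intervalIntegral.integral_interval_sub_left (hint 0 b) (hint 0 a),
    integral_abs_zero_left, integral_abs_zero_left]
  ring

open MeasureTheory in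
theorem stmt19 (u : ℝ) (hu : 0 < u) (x : ℝ) :
    (2 * u)⁻¹ * ∫ z in (-u)..u, |x + z|
      = if |x| ≤ u then x ^ 2 / (2 * u) + u / 2 else |x| := by
  rw [intervalIntegral.integral_comp_add_left (fun t ↦ |t|), integral_abs, ← sub_eq_add_neg]
  split_ifs with h
  · rw [abs_le] at h
    rw [abs_of_nonneg (by linarith : 0 ≤ x + u), abs_of_nonpos (by linarith : x - u ≤ 0)]
    field_simp
    ring
  · rcases lt_abs.mp (not_le.mp h) with hx | hx
    · rw [abs_of_pos (by linarith : 0 < x + u), abs_of_pos (by linarith : 0 < x - u),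
        abs_of_pos (by linarith : 0 < x)]
      field_simp
      ring
    · rw [abs_of_neg (by linarith : x + u < 0), abs_of_neg (by linarith : x - u < 0),
        abs_of_neg (by linarith : x < 0)]
      field_simp
      ring
end
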